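/- arXiv:2508.08203 — 4 statements merged into one kernel-verified Lean document; each statement's English description precedes it below -/
import Mathlib

section
/- Let A = fromBlocks H₁ Eᴴ E H₂ be an (m+n)×(m+n) Hermitian complex matrix with largest eigenvalue λ₁, and let λ̃₁ be the largest eigenvalue of à = fromBlocks H₁ 0 0 H₂. Then λ₁ ≥ λ̃₁; moreover, if λ₁ > λ̃₁, then η₁ := the distance from λ̃₁ to the spectrum of the block not containing λ̃₁ satisfies (λ₁ − λ̃₁)·(λ₁ − λ̃₁ + η₁) ≤ ‖E‖², and consequently λ₁ − λ̃₁ ≤ 2‖E‖² / (η₁ + √(η₁² + 4‖E‖²)). -/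
/-!
Split the top eigenvector of `A` into blocks `(x, y)`; the eigenvalue equation reads
`(λ₁ - H₁) x = Eᴴ y` and `(λ₁ - H₂) y = E x`. Since `λ₁ > λ̃₁`, both `λ₁ - H₁` and `λ₁ - H₂` are
positive definite: one is bounded below by `λ₁ - λ̃₁`, the other, whose spectrum stays at least
`η₁` below `λ̃₁`, by `λ₁ - λ̃₁ + η₁`. Hence `(λ₁ - λ̃₁) ‖x‖ ≤ ‖E‖ ‖y‖` and
`(λ₁ - λ̃₁ + η₁) ‖y‖ ≤ ‖E‖ ‖x‖` (or the same with the roles swapped); multiplying and cancelling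
`‖x‖ ‖y‖` gives the quadratic inequality, and the last bound is its positive root.
The inequality `λ̃₁ ≤ λ₁` holds because `A ≤ λ₁` in the Loewner order, and compressing to a
diagonal block preserves this.
-/

open Matrix

/-- The spectral norm (largest singular value) of a complex matrix. -/
noncomputable def specNorm {p q : ℕ} (M : Matrix (Fin p) (Fin q) ℂ) : ℝ :=
  ‖LinearMap.toContinuousLinearMap (Matrix.toEuclideanLin M)‖

open scoped MatrixOrder InnerProductSpace ComplexOrder

namespace Matrix.IsHermitian

variable {𝕜 : Type*} [RCLike 𝕜] {m n : Type*} [Fintype m] [DecidableEq m] [Fintype n]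
  [DecidableEq n] {A : Matrix n n 𝕜}

theorem le_algebraMap_iff_eigenvalues_le (hA : A.IsHermitian) {c : ℝ} :
    A ≤ algebraMap ℝ _ c ↔ ∀ i, hA.eigenvalues i ≤ c := by
  rw [le_algebraMap_iff_spectrum_le hA.isSelfAdjoint, hA.spectrum_real_eq_range_eigenvalues]
  exact Set.forall_mem_range

theorem eigenvalues_le_of_submatrix_eq (hA : A.IsHermitian) {B : Matrix m m 𝕜}
    (hB : B.IsHermitian) {e : m → n} (he : Function.Injective e) (hAB : A.submatrix e e = B)
    {c : ℝ} (h : ∀ i, hA.eigenvalues i ≤ c) (j : m) : hB.eigenvalues j ≤ c := by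
  have hPSD := (Matrix.le_iff.mp (hA.le_algebraMap_iff_eigenvalues_le.mpr h)).submatrix e
  have hsub : (algebraMap ℝ (Matrix n n 𝕜) c - A).submatrix e e = algebraMap ℝ _ c - B := by
    subst hAB; ext i j; simp [algebraMap_eq_diagonal, diagonal_apply, he.eq_iff]
  rw [hsub] at hPSD
  exact hB.le_algebraMap_iff_eigenvalues_le.mp (Matrix.le_iff.mpr hPSD) j

theorem mul_norm_le_norm_smul_sub_toEuclideanLin (hA : A.IsHermitian) {lam c : ℝ}
    (h : ∀ i, hA.eigenvalues i + c ≤ lam) (x : EuclideanSpace 𝕜 n) :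
    c * ‖x‖ ≤ ‖lam • x - toEuclideanLin A x‖ := by
  have hpos : (algebraMap ℝ (Matrix n n 𝕜) (lam - c) - A).PosSemidef :=
    Matrix.le_iff.mp <| hA.le_algebraMap_iff_eigenvalues_le.mpr fun i => by linarith [h i]
  have hquad : c * ‖x‖ ^ 2 ≤ RCLike.re ⟪x, lam • x - toEuclideanLin A x⟫_𝕜 := by
    have hscalar : toEuclideanLin (algebraMap ℝ (Matrix n n 𝕜) (lam - c)) x = (lam - c) • x := by
      ext i; simp [Algebra.algebraMap_eq_smul_one, toLpLin_apply, Matrix.smul_mulVec]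
    have hre : ∀ r : ℝ, RCLike.re ⟪x, r • x⟫_𝕜 = r * ‖x‖ ^ 2 := fun r => by
      rw [RCLike.real_smul_eq_coe_smul (K := 𝕜), inner_smul_right, RCLike.re_ofReal_mul,
        inner_self_eq_norm_sq]
    have hnonneg := (Matrix.isPositive_toEuclideanLin_iff.mpr hpos).re_inner_nonneg_right x
    rw [map_sub, LinearMap.sub_apply, hscalar, inner_sub_right, map_sub, hre] at hnonneg
    rw [inner_sub_right, map_sub, hre]
    linarith
  rcases (norm_nonneg x).eq_or_lt with hx | hx
  · rw [← hx, mul_zero]; exact norm_nonneg _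
  · refine le_of_mul_le_mul_right ?_ hx
    calc c * ‖x‖ * ‖x‖ = c * ‖x‖ ^ 2 := by ring
      _ ≤ _ := hquad.trans (re_inner_le_norm _ _)
      _ = _ := mul_comm _ _

end Matrix.IsHermitian

theorem norm_toEuclideanLin_le_specNorm_mul {p q : ℕ} (M : Matrix (Fin p) (Fin q) ℂ)
    (x : EuclideanSpace ℂ (Fin q)) : ‖toEuclideanLin M x‖ ≤ specNorm M * ‖x‖ :=
  (LinearMap.toContinuousLinearMap (toEuclideanLin M)).le_opNorm x

theorem specNorm_conjTranspose {p q : ℕ} (M : Matrix (Fin p) (Fin q) ℂ) :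
    specNorm Mᴴ = specNorm M := by
  rw [specNorm, specNorm, toEuclideanLin_conjTranspose_eq_adjoint,
    LinearMap.adjoint_toContinuousLinearMap, ContinuousLinearMap.adjoint.norm_map]

theorem mul_le_sq_of_mul_le_mul_of_mul_le_mul {a b c d e : ℝ} (ha : 0 ≤ a) (hb : 0 ≤ b)
    (hab : 0 < a ∨ 0 < b) (hc : 0 < c) (hd : 0 < d) (h₁ : c * a ≤ e * b) (h₂ : d * b ≤ e * a) :
    c * d ≤ e ^ 2 := by
  have ha' : 0 < a := by
    refine hab.elim id fun hb' => ha.lt_of_ne fun ha0 => ?_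
    rw [← ha0, mul_zero] at h₂
    nlinarith [mul_pos hd hb']
  have hb' : 0 < b := hb.lt_of_ne fun hb0 => by
    rw [← hb0, mul_zero] at h₁
    nlinarith [mul_pos hc ha']
  have hprod : c * a * (d * b) ≤ e * b * (e * a) :=
    mul_le_mul h₁ h₂ (by positivity) (by nlinarith [mul_pos hc ha'])
  have hab' : 0 < a * b := mul_pos ha' hb'
  nlinarith

theorem le_two_mul_sq_div_of_mul_add_le {d η e : ℝ} (hd : 0 < d) (hη : 0 ≤ η)
    (h : d * (d + η) ≤ e ^ 2) : d ≤ 2 * e ^ 2 / (η + √(η ^ 2 + 4 * e ^ 2)) := by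
  have hs : √(η ^ 2 + 4 * e ^ 2) ^ 2 = η ^ 2 + 4 * e ^ 2 := Real.sq_sqrt (by positivity)
  have hs' : η ≤ √(η ^ 2 + 4 * e ^ 2) := Real.le_sqrt_of_sq_le (by nlinarith)
  have he : 0 < e ^ 2 := by nlinarith
  rw [le_div_iff₀ (by nlinarith)]
  nlinarith

theorem iInf_abs_sub_le_sub {ι : Type*} [Finite ι] {f : ι → ℝ} {t : ℝ} (h : ∀ j, f j ≤ t)
    (j : ι) : ⨅ k, |t - f k| ≤ t - f j :=
  (ciInf_le (Finite.bddBelow_range _) j).trans_eq (abs_of_nonneg (sub_nonneg.2 (h j)))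

theorem mul_le_specNorm_sq_of_fromBlocks_mulVec_eq_smul {m n : ℕ}
    {H₁ : Matrix (Fin m) (Fin m) ℂ} {H₂ : Matrix (Fin n) (Fin n) ℂ} {E : Matrix (Fin n) (Fin m) ℂ}
    (hH₁ : H₁.IsHermitian) (hH₂ : H₂.IsHermitian) {lam c d : ℝ}
    {v : EuclideanSpace ℂ (Fin m ⊕ Fin n)} (hv : v ≠ 0)
    (hAv : fromBlocks H₁ Eᴴ E H₂ *ᵥ v.ofLp = lam • v.ofLp) (hc : 0 < c) (hd : 0 < d)
    (h₁ : ∀ i, hH₁.eigenvalues i + c ≤ lam) (h₂ : ∀ j, hH₂.eigenvalues j + d ≤ lam) :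
    c * d ≤ specNorm E ^ 2 := by
  set x : EuclideanSpace ℂ (Fin m) := WithLp.toLp 2 (v.ofLp ∘ Sum.inl)
  set y : EuclideanSpace ℂ (Fin n) := WithLp.toLp 2 (v.ofLp ∘ Sum.inr)
  have hsplit : v.ofLp = Sum.elim x.ofLp y.ofLp := (Sum.elim_comp_inl_inr _).symm
  rw [hsplit, fromBlocks_mulVec] at hAv
  have hx : lam • x - toEuclideanLin H₁ x = toEuclideanLin Eᴴ y := by
    ext a
    have := congrFun hAv (Sum.inl a)
    simp only [Sum.elim_comp_inl, Sum.elim_comp_inr, Sum.elim_inl, Pi.add_apply, Pi.smul_apply,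
      Complex.real_smul, PiLp.sub_apply, PiLp.smul_apply, ofLp_toLpLin, toLin'_apply] at this ⊢
    linear_combination -this
  have hy : lam • y - toEuclideanLin H₂ y = toEuclideanLin E x := by
    ext b
    have := congrFun hAv (Sum.inr b)
    simp only [Sum.elim_comp_inl, Sum.elim_comp_inr, Sum.elim_inr, Pi.add_apply, Pi.smul_apply,
      Complex.real_smul, PiLp.sub_apply, PiLp.smul_apply, ofLp_toLpLin, toLin'_apply] at this ⊢
    linear_combination -this
  have hxy : 0 < ‖x‖ ∨ 0 < ‖y‖ := by
    simp only [norm_pos_iff]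
    by_contra! h
    exact hv (WithLp.ofLp_injective _ (by rw [hsplit, h.1, h.2]; ext (a | b) <;> rfl))
  refine mul_le_sq_of_mul_le_mul_of_mul_le_mul (norm_nonneg x) (norm_nonneg y) hxy hc hd ?_ ?_
  · calc c * ‖x‖ ≤ ‖lam • x - toEuclideanLin H₁ x‖ :=
          hH₁.mul_norm_le_norm_smul_sub_toEuclideanLin h₁ x
      _ ≤ specNorm E * ‖y‖ := by
        rw [hx, ← specNorm_conjTranspose]; exact norm_toEuclideanLin_le_specNorm_mul _ _
  · calc d * ‖y‖ ≤ ‖lam • y - toEuclideanLin H₂ y‖ :=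
          hH₂.mul_norm_le_norm_smul_sub_toEuclideanLin h₂ y
      _ ≤ specNorm E * ‖x‖ := by rw [hy]; exact norm_toEuclideanLin_le_specNorm_mul _ _

/-- The largest eigenvalue `lam1` of `A = fromBlocks H₁ Eᴴ E H₂` dominates the
largest eigenvalue `lamt1` of `Ã = fromBlocks H₁ 0 0 H₂`; and if `lam1 > lamt1`
then, with `η₁` the distance from `lamt1` to the spectrum of the block not
containing it, `(lam1 − lamt1)(lam1 − lamt1 + η₁) ≤ ‖E‖²`, whence
`lam1 − lamt1 ≤ 2‖E‖²/(η₁ + √(η₁² + 4‖E‖²))`. -/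
theorem largest_eigenvalue_block_perturbation {m n : ℕ}
    (H₁ : Matrix (Fin m) (Fin m) ℂ) (H₂ : Matrix (Fin n) (Fin n) ℂ)
    (E : Matrix (Fin n) (Fin m) ℂ)
    (hH₁ : H₁.IsHermitian) (hH₂ : H₂.IsHermitian)
    (hA : (Matrix.fromBlocks H₁ Eᴴ E H₂).IsHermitian)
    (lam1 lamt1 η₁ : ℝ)
    (hlam1 : IsGreatest (Set.range hA.eigenvalues) lam1)
    (hlamt1 : IsGreatest (Set.range hH₁.eigenvalues ∪ Set.range hH₂.eigenvalues) lamt1)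
    (hη₁ : (lamt1 ∈ Set.range hH₁.eigenvalues →
              η₁ = ⨅ j, |lamt1 - hH₂.eigenvalues j|) ∧
           (lamt1 ∉ Set.range hH₁.eigenvalues →
              η₁ = ⨅ j, |lamt1 - hH₁.eigenvalues j|)) :
    lamt1 ≤ lam1 ∧
    (lamt1 < lam1 →
      (lam1 - lamt1) * (lam1 - lamt1 + η₁) ≤ specNorm E ^ 2 ∧
      lam1 - lamt1 ≤
        2 * specNorm E ^ 2 / (η₁ + Real.sqrt (η₁ ^ 2 + 4 * specNorm E ^ 2))) := by
  have hA_le : ∀ k, hA.eigenvalues k ≤ lam1 := fun k => hlam1.2 ⟨k, rfl⟩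
  have hH₁_le : ∀ k, hH₁.eigenvalues k ≤ lamt1 := fun k => hlamt1.2 (.inl ⟨k, rfl⟩)
  have hH₂_le : ∀ k, hH₂.eigenvalues k ≤ lamt1 := fun k => hlamt1.2 (.inr ⟨k, rfl⟩)
  refine ⟨?_, fun hlt => ?_⟩
  · rcases hlamt1.1 with ⟨k, rfl⟩ | ⟨k, rfl⟩
    · exact hA.eigenvalues_le_of_submatrix_eq hH₁ Sum.inl_injective rfl hA_le k
    · exact hA.eigenvalues_le_of_submatrix_eq hH₂ Sum.inr_injective rfl hA_le k
  obtain ⟨i, hi⟩ := hlam1.1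
  have hv := hA.eigenvectorBasis.orthonormal.ne_zero i
  have hAv : fromBlocks H₁ Eᴴ E H₂ *ᵥ (hA.eigenvectorBasis i).ofLp =
      lam1 • (hA.eigenvectorBasis i).ofLp := hi ▸ hA.mulVec_eigenvectorBasis i
  have hd : 0 < lam1 - lamt1 := sub_pos.2 hlt
  have hη : 0 ≤ η₁ := by
    by_cases hmem : lamt1 ∈ Set.range hH₁.eigenvalues
    · exact hη₁.1 hmem ▸ Real.iInf_nonneg fun _ => abs_nonneg _
    · exact hη₁.2 hmem ▸ Real.iInf_nonneg fun _ => abs_nonneg _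
  have key : (lam1 - lamt1) * (lam1 - lamt1 + η₁) ≤ specNorm E ^ 2 := by
    by_cases hmem : lamt1 ∈ Set.range hH₁.eigenvalues
    · have hgap := iInf_abs_sub_le_sub hH₂_le
      rw [← hη₁.1 hmem] at hgap
      exact mul_le_specNorm_sq_of_fromBlocks_mulVec_eq_smul hH₁ hH₂ hv hAv hd (by linarith)
        (fun k => by linarith [hH₁_le k]) (fun k => by linarith [hgap k])
    · have hgap := iInf_abs_sub_le_sub hH₁_le
      rw [← hη₁.2 hmem] at hgap
      rw [mul_comm]
      exact mul_le_specNorm_sq_of_fromBlocks_mulVec_eq_smul hH₁ hH₂ hv hAv (by linarith) hd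
        (fun k => by linarith [hgap k]) (fun k => by linarith [hH₂_le k])
  exact ⟨key, le_two_mul_sq_div_of_mul_add_le hd hη key⟩
end

section
/- Let A = fromBlocks H₁ Eᴴ E H₂ be an (m+n)×(m+n) Hermitian complex matrix and let λ₁ be its largest eigenvalue. Suppose λ₁ is strictly larger than every eigenvalue of H₂, so that H₂ − λ₁·I is invertible and negative definite. Then the Hermitian matrix M(λ₁) := H₁ − λ₁·I − Eᴴ·(H₂ − λ₁·I)⁻¹·E is negative semidefinite and has 0 as an eigenvalue; i.e., the largest eigenvalue of M(λ₁) equals 0. -/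
/-!
Put `D = λ₁ I - H₂`, positive definite because `λ₁` exceeds the spectrum of `H₂`. Then
`λ₁ I - A = fromBlocks (λ₁ I - H₁) (-Eᴴ) (-E) D` has Schur complement `-M(λ₁)` with respect to `D`.
For a Hermitian matrix, `c` is the largest eigenvalue iff `c I - A` is positive semidefinite and
singular. Both properties hold for `λ₁ I - A` and pass to the Schur complement because `D` is
positive definite; read backwards for `M(λ₁)` and `c = 0`, they give the claim.
-/

open Matrix ComplexOrder

namespace Matrix

section ShiftedHermitian

open scoped MatrixOrder

variable {𝕜 n : Type*} [RCLike 𝕜] [Fintype n] [DecidableEq n] {A : Matrix n n 𝕜}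

lemma IsHermitian.posSemidef_smul_one_sub_iff (hA : A.IsHermitian) (c : ℝ) :
    (c • 1 - A).PosSemidef ↔ ∀ i, hA.eigenvalues i ≤ c := by
  rw [← Algebra.algebraMap_eq_smul_one, ← le_iff, le_algebraMap_iff_spectrum_le hA.isSelfAdjoint,
    hA.spectrum_real_eq_range_eigenvalues, Set.forall_mem_range]

lemma IsHermitian.isUnit_smul_one_sub_iff (hA : A.IsHermitian) (c : ℝ) :
    IsUnit (c • 1 - A) ↔ ∀ i, hA.eigenvalues i ≠ c := by
  rw [← Algebra.algebraMap_eq_smul_one, ← spectrum.notMem_iff,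
    hA.spectrum_real_eq_range_eigenvalues, Set.mem_range, not_exists]

lemma IsHermitian.posDef_smul_one_sub (hA : A.IsHermitian) {c : ℝ}
    (h : ∀ i, hA.eigenvalues i < c) : (c • 1 - A).PosDef :=
  ((hA.posSemidef_smul_one_sub_iff c).2 fun i => (h i).le).posDef_iff_isUnit.2 <|
    (hA.isUnit_smul_one_sub_iff c).2 fun i => (h i).ne

lemma IsHermitian.isGreatest_eigenvalues_iff (hA : A.IsHermitian) (c : ℝ) :
    IsGreatest (Set.range hA.eigenvalues) c ↔ (c • 1 - A).PosSemidef ∧ ¬IsUnit (c • 1 - A) := by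
  rw [hA.posSemidef_smul_one_sub_iff, hA.isUnit_smul_one_sub_iff, IsGreatest,
    mem_upperBounds, Set.forall_mem_range, and_comm]
  simp

end ShiftedHermitian

lemma smul_one_sub_fromBlocks {R α m n : Type*} [Ring α] [SMulZeroClass R α]
    [DecidableEq m] [DecidableEq n]
    (c : R) (A : Matrix m m α) (B : Matrix m n α) (C : Matrix n m α) (D : Matrix n n α) :
    c • 1 - fromBlocks A B C D = fromBlocks (c • 1 - A) (-B) (-C) (c • 1 - D) := by
  ext (i | i) (j | j) <;> simp [one_apply]

end Matrix

theorem schur_complement_at_largest_eigenvalue_general {m n : ℕ}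
    (H₁ : Matrix (Fin m) (Fin m) ℂ) (H₂ : Matrix (Fin n) (Fin n) ℂ)
    (E : Matrix (Fin n) (Fin m) ℂ)
    (hH₂ : H₂.IsHermitian)
    (hA : (Matrix.fromBlocks H₁ Eᴴ E H₂).IsHermitian)
    (lam1 : ℝ) (hlam1 : IsGreatest (Set.range hA.eigenvalues) lam1)
    (hgt : ∀ j, hH₂.eigenvalues j < lam1)
    (hM : (H₁ - (lam1 : ℂ) • 1 - Eᴴ * (H₂ - (lam1 : ℂ) • 1)⁻¹ * E).IsHermitian) :
    IsUnit (H₂ - (lam1 : ℂ) • 1) ∧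
    (-(H₂ - (lam1 : ℂ) • 1)).PosDef ∧
    (-(H₁ - (lam1 : ℂ) • 1 - Eᴴ * (H₂ - (lam1 : ℂ) • 1)⁻¹ * E)).PosSemidef ∧
    IsGreatest (Set.range hM.eigenvalues) 0 := by
  set D := lam1 • 1 - H₂
  have hD : D.PosDef := hH₂.posDef_smul_one_sub hgt
  have : Invertible D := hD.isUnit.invertible
  have hH₂D : H₂ - (lam1 : ℂ) • 1 = -D := by rw [Complex.coe_smul, neg_sub]
  have hblock : lam1 • 1 - fromBlocks H₁ Eᴴ E H₂ =
      fromBlocks (lam1 • 1 - H₁) (-Eᴴ) (-Eᴴ)ᴴ D := by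
    rw [smul_one_sub_fromBlocks, conjTranspose_neg, conjTranspose_conjTranspose]
  have hschur : -(H₁ - (lam1 : ℂ) • 1 - Eᴴ * (H₂ - (lam1 : ℂ) • 1)⁻¹ * E) =
      lam1 • 1 - H₁ - (-Eᴴ) * D⁻¹ * (-Eᴴ)ᴴ := by
    rw [hH₂D, inv_eq_left_inv (neg_mul_neg D⁻¹ D ▸ inv_mul_of_invertible D), Complex.coe_smul,
      conjTranspose_neg, conjTranspose_conjTranspose]
    simp only [Matrix.mul_neg, Matrix.neg_mul, neg_neg]
    abel
  obtain ⟨hApsd, hAsingular⟩ := (hA.isGreatest_eigenvalues_iff lam1).1 hlam1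
  rw [hblock] at hApsd hAsingular
  have hMnonpos : (-(H₁ - (lam1 : ℂ) • 1 - Eᴴ * (H₂ - (lam1 : ℂ) • 1)⁻¹ * E)).PosSemidef := by
    rwa [hschur, ← PosDef.fromBlocks₂₂ _ _ hD]
  have hMsingular : ¬IsUnit (-(H₁ - (lam1 : ℂ) • 1 - Eᴴ * (H₂ - (lam1 : ℂ) • 1)⁻¹ * E)) := by
    rwa [hschur, ← invOf_eq_nonsing_inv, ← isUnit_fromBlocks_iff_of_invertible₂₂]
  refine ⟨by rw [hH₂D]; exact hD.isUnit.neg, by rwa [hH₂D, neg_neg], hMnonpos, ?_⟩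
  exact (hM.isGreatest_eigenvalues_iff 0).2 ⟨by simpa using hMnonpos, by simpa using hMsingular⟩

/-- If `λ₁`, the largest eigenvalue of the Hermitian block matrix
`A = fromBlocks H₁ Eᴴ E H₂`, is strictly larger than every eigenvalue of `H₂`,
then `H₂ − λ₁ I` is invertible and negative definite, and the Hermitian matrix
`M(λ₁) = H₁ − λ₁ I − Eᴴ (H₂ − λ₁ I)⁻¹ E` is negative semidefinite with `0` as
its largest eigenvalue. -/
theorem schur_complement_at_largest_eigenvalue {m n : ℕ}
    (H₁ : Matrix (Fin m) (Fin m) ℂ) (H₂ : Matrix (Fin n) (Fin n) ℂ)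
    (E : Matrix (Fin n) (Fin m) ℂ)
    (hH₁ : H₁.IsHermitian) (hH₂ : H₂.IsHermitian)
    (hA : (Matrix.fromBlocks H₁ Eᴴ E H₂).IsHermitian)
    (lam1 : ℝ) (hlam1 : IsGreatest (Set.range hA.eigenvalues) lam1)
    (hgt : ∀ j, hH₂.eigenvalues j < lam1)
    (hM : (H₁ - (lam1 : ℂ) • 1 - Eᴴ * (H₂ - (lam1 : ℂ) • 1)⁻¹ * E).IsHermitian) :
    IsUnit (H₂ - (lam1 : ℂ) • 1) ∧
    (-(H₂ - (lam1 : ℂ) • 1)).PosDef ∧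
    (-(H₁ - (lam1 : ℂ) • 1 - Eᴴ * (H₂ - (lam1 : ℂ) • 1)⁻¹ * E)).PosSemidef ∧
    IsGreatest (Set.range hM.eigenvalues) 0 :=
  schur_complement_at_largest_eigenvalue_general H₁ H₂ E hH₂ hA lam1 hlam1 hgt hM
end

section
/- Let A be an N×N Hermitian complex matrix (N ≥ 2), let x be a unit vector in ℂ^N, set λ̃ := xᴴAx and r := Ax − λ̃x. Let X₂ be an N×(N−1) matrix whose columns form an orthonormal basis of the orthogonal complement of x, and let Ĥ := X₂ᴴAX₂ be the compression of A to that complement, with η̂ := the minimum of |λ̃ − μ| over eigenvalues μ of Ĥ. Let λ₁ ≥ … ≥ λ_N be the eigenvalues of A in decreasing order, and let k be the position of λ̃ in the decreasing rearrangement of the multiset {λ̃} ∪ spec(Ĥ). Then |λ_k − λ̃| ≤ 2‖r‖² / (η̂ + √(η̂² + 4‖r‖²)). -/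
/-!
Let `δ` be the positive root of `δ (δ + η̂) = ‖r‖²`. On `span {x} ⊕ X₂ W`, where `W` is spanned
by the eigenvectors of `Ĥ` with eigenvalue `≤ λ̃` (hence `≤ λ̃ - η̂`), the Rayleigh quotient of `A`
is at most `λ̃ + δ`: for `v = c x + X₂ w` the cross terms are `2 Re (c ⟪X₂ w, r⟫) ≤ 2 |c| ‖w‖ ‖r‖`,
and `2 a b ‖r‖ - η̂ b² ≤ δ (a² + b²)`. Counting positions in the two sorted lists, this subspace
and the span of the eigenvectors of `A` with eigenvalue `≥ λ_k` have dimensions adding up to more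
than `N`, so a common nonzero vector gives `λ_k ≤ λ̃ + δ`. The lower bound is the same argument
for `-A`.
-/

open Matrix

noncomputable def euclNorm {N : ℕ} (v : Fin N → ℂ) : ℝ :=
  ‖(WithLp.equiv 2 (Fin N → ℂ)).symm v‖

open RCLike InnerProductSpace Module Submodule Finset
open scoped InnerProductSpace

/-- The positive root `δ` of `δ * (δ + η) = R ^ 2`. -/
noncomputable def ritzGap (η R : ℝ) : ℝ := 2 * R ^ 2 / (η + √(η ^ 2 + 4 * R ^ 2))

section ritzGap

variable {η R : ℝ}

theorem ritzGap_nonneg (hη : 0 ≤ η) : 0 ≤ ritzGap η R := by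
  unfold ritzGap; positivity

theorem ritzGap_mul_ritzGap_add (hη : 0 ≤ η) : ritzGap η R * (ritzGap η R + η) = R ^ 2 := by
  obtain rfl | hR := eq_or_ne R 0
  · simp [ritzGap]
  have hS : √(η ^ 2 + 4 * R ^ 2) ^ 2 = η ^ 2 + 4 * R ^ 2 := Real.sq_sqrt (by positivity)
  have hpos : 0 < η + √(η ^ 2 + 4 * R ^ 2) := by positivity
  unfold ritzGap
  generalize √(η ^ 2 + 4 * R ^ 2) = S at hS hpos
  field_simp
  nlinarith [hS]

theorem two_mul_mul_mul_sub_le_ritzGap_mul (hη : 0 ≤ η) (a b : ℝ) :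
    2 * a * b * R - η * b ^ 2 ≤ ritzGap η R * (a ^ 2 + b ^ 2) := by
  have hδ := ritzGap_mul_ritzGap_add (R := R) hη
  obtain hδ0 | hδ0 := (ritzGap_nonneg (R := R) hη).eq_or_lt
  · have hR : R = 0 := by nlinarith
    subst hR
    rw [← hδ0]
    nlinarith
  · -- `δ * (δ (a² + b²) - 2abR + ηb²) = (δa - Rb)²`
    nlinarith [sq_nonneg (ritzGap η R * a - R * b), mul_pos hδ0 hδ0]

end ritzGap

section InnerProductSpace

variable {𝕜 E : Type*} [RCLike 𝕜] [NormedAddCommGroup E] [InnerProductSpace 𝕜 E]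

theorem LinearMap.IsSymmetric.neg {T : E →ₗ[𝕜] E} (hT : T.IsSymmetric) : (-T).IsSymmetric :=
  fun x y => by simp [hT x y]

theorem LinearMap.IsSymmetric.re_inner_smul_add_map_le {T : E →ₗ[𝕜] E} (hT : T.IsSymmetric)
    {x z : E} (hx : ‖x‖ = 1) {lamt η : ℝ} (hlamt : ⟪x, T x⟫_𝕜 = lamt) (hη : 0 ≤ η)
    (hxz : ⟪x, z⟫_𝕜 = 0) (hz : re ⟪z, T z⟫_𝕜 ≤ (lamt - η) * ‖z‖ ^ 2) (c : 𝕜) :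
    re ⟪c • x + z, T (c • x + z)⟫_𝕜 ≤
      (lamt + ritzGap η ‖T x - (lamt : 𝕜) • x‖) * ‖c • x + z‖ ^ 2 := by
  set r := T x - (lamt : 𝕜) • x
  have hzx : ⟪z, x⟫_𝕜 = 0 := inner_eq_zero_symm.mp hxz
  have hnorm : ‖c • x + z‖ ^ 2 = ‖c‖ ^ 2 + ‖z‖ ^ 2 := by
    have h := norm_add_sq_eq_norm_sq_add_norm_sq_of_inner_eq_zero (𝕜 := 𝕜) (c • x) z
      (by rw [inner_smul_left, hxz, mul_zero])
    rw [norm_smul, hx, mul_one] at h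
    linear_combination h
  -- since `z ⟂ x`, the off-diagonal terms only see the residual `r`
  have hcross : ⟪z, T (c • x)⟫_𝕜 = ⟪z, c • r⟫_𝕜 := by
    simp [r, smul_sub, inner_sub_right, inner_smul_right, hzx]
  have hcross' : re ⟪c • x, T z⟫_𝕜 = re ⟪z, T (c • x)⟫_𝕜 := by
    rw [← hT, ← inner_conj_symm, conj_re]
  have hexpand : re ⟪c • x + z, T (c • x + z)⟫_𝕜 =
      lamt * ‖c‖ ^ 2 + 2 * re ⟪z, c • r⟫_𝕜 + re ⟪z, T z⟫_𝕜 := by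
    rw [map_add, inner_add_left, inner_add_right, inner_add_right, map_add, map_add, map_add,
      hcross', hcross, map_smul, inner_smul_left, inner_smul_right, hlamt, ← mul_assoc,
      RCLike.conj_mul]
    norm_cast
    ring
  have hcs : re ⟪z, c • r⟫_𝕜 ≤ ‖c‖ * ‖z‖ * ‖r‖ :=
    calc re ⟪z, c • r⟫_𝕜 ≤ ‖z‖ * ‖c • r‖ := re_inner_le_norm _ _
      _ = ‖c‖ * ‖z‖ * ‖r‖ := by rw [norm_smul]; ring
  have := two_mul_mul_mul_sub_le_ritzGap_mul (R := ‖r‖) hη ‖c‖ ‖z‖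
  rw [hexpand, hnorm]
  nlinarith

theorem LinearMap.IsSymmetric.le_add_ritzGap [FiniteDimensional 𝕜 E] {T : E →ₗ[𝕜] E}
    (hT : T.IsSymmetric) {x : E} (hx : ‖x‖ = 1) {lamt η c : ℝ} (hlamt : ⟪x, T x⟫_𝕜 = lamt)
    (hη : 0 ≤ η) {Z Y : Submodule 𝕜 E} (hZx : Z ≤ (𝕜 ∙ x)ᗮ)
    (hZ : ∀ z ∈ Z, re ⟪z, T z⟫_𝕜 ≤ (lamt - η) * ‖z‖ ^ 2)
    (hY : ∀ y ∈ Y, c * ‖y‖ ^ 2 ≤ re ⟪y, T y⟫_𝕜)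
    (hdim : finrank 𝕜 E < 1 + finrank 𝕜 Z + finrank 𝕜 Y) :
    c ≤ lamt + ritzGap η ‖T x - (lamt : 𝕜) • x‖ := by
  have hx0 : x ≠ 0 := norm_ne_zero_iff.mp (by simp [hx])
  have hsup : finrank 𝕜 ↥((𝕜 ∙ x) ⊔ Z) = 1 + finrank 𝕜 Z := by
    have hinf : (𝕜 ∙ x) ⊓ Z = ⊥ := eq_bot_iff.mpr fun v hv =>
      (inf_orthogonal_eq_bot (𝕜 ∙ x)).le ⟨hv.1, hZx hv.2⟩
    rw [← add_zero (finrank 𝕜 ↥((𝕜 ∙ x) ⊔ Z)), ← finrank_bot 𝕜 E, ← hinf,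
      finrank_sup_add_finrank_inf_eq, finrank_span_singleton hx0]
  obtain ⟨v, hvS, hvY, hv0⟩ : ∃ v ∈ (𝕜 ∙ x) ⊔ Z, v ∈ Y ∧ v ≠ 0 := by
    by_contra! h
    have := finrank_add_finrank_le_of_disjoint (disjoint_def.mpr h)
    omega
  obtain ⟨_, hw, z, hz, rfl⟩ := mem_sup.mp hvS
  obtain ⟨a, rfl⟩ := mem_span_singleton.mp hw
  have hxz : ⟪x, z⟫_𝕜 = 0 := mem_orthogonal_singleton_iff_inner_right.mp (hZx hz)
  have := (hY _ hvY).trans (hT.re_inner_smul_add_map_le hx hlamt hη hxz (hZ z hz) a)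
  exact le_of_mul_le_mul_right this (by positivity)

section Orthonormal

variable {ι : Type*} {b : ι → E} {T : E →ₗ[𝕜] E} {μ : ι → ℝ}

theorem Orthonormal.inner_map_eq_ite [DecidableEq ι] (hb : Orthonormal 𝕜 b)
    (hbT : ∀ i, T (b i) = (μ i : 𝕜) • b i) (i j : ι) :
    ⟪b i, T (b j)⟫_𝕜 = if i = j then (μ i : 𝕜) else 0 := by
  rw [hbT, inner_smul_right, orthonormal_iff_ite.mp hb]
  split_ifs with h <;> simp [h]

variable [Fintype ι]

theorem re_inner_sum_smul_map_sum_smul [DecidableEq ι]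
    (hbT : ∀ i j, ⟪b i, T (b j)⟫_𝕜 = if i = j then (μ i : 𝕜) else 0) (l : ι → 𝕜) :
    re ⟪∑ i, l i • b i, T (∑ i, l i • b i)⟫_𝕜 = ∑ i, μ i * ‖l i‖ ^ 2 := by
  simp only [map_sum, map_smul, sum_inner, inner_sum, inner_smul_left, inner_smul_right, hbT,
    mul_ite, mul_zero, Finset.sum_ite_eq', Finset.mem_univ, if_true, ← mul_assoc,
    RCLike.mul_conj]
  norm_cast
  simp only [mul_comm]

theorem Orthonormal.norm_sum_smul_sq (hb : Orthonormal 𝕜 b) (l : ι → 𝕜) :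
    ‖∑ i, l i • b i‖ ^ 2 = ∑ i, ‖l i‖ ^ 2 := by
  rw [norm_sq_eq_re_inner (𝕜 := 𝕜), hb.inner_sum]
  simp only [RCLike.conj_mul, map_sum]
  norm_cast

variable [DecidableEq ι]

theorem Orthonormal.mul_norm_sq_le_re_inner_map_self (hb : Orthonormal 𝕜 b)
    (hbT : ∀ i j, ⟪b i, T (b j)⟫_𝕜 = if i = j then (μ i : 𝕜) else 0) {c : ℝ}
    (hc : ∀ i, c ≤ μ i) {v : E} (hv : v ∈ span 𝕜 (Set.range b)) : c * ‖v‖ ^ 2 ≤ re ⟪v, T v⟫_𝕜 := by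
  obtain ⟨l, rfl⟩ := (mem_span_range_iff_exists_fun 𝕜).mp hv
  rw [hb.norm_sum_smul_sq, re_inner_sum_smul_map_sum_smul hbT, Finset.mul_sum]
  gcongr with i
  exact hc i

theorem Orthonormal.re_inner_map_self_le_mul_norm_sq (hb : Orthonormal 𝕜 b)
    (hbT : ∀ i j, ⟪b i, T (b j)⟫_𝕜 = if i = j then (μ i : 𝕜) else 0) {c : ℝ}
    (hc : ∀ i, μ i ≤ c) {v : E} (hv : v ∈ span 𝕜 (Set.range b)) : re ⟪v, T v⟫_𝕜 ≤ c * ‖v‖ ^ 2 := by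
  obtain ⟨l, rfl⟩ := (mem_span_range_iff_exists_fun 𝕜).mp hv
  rw [hb.norm_sum_smul_sq, re_inner_sum_smul_map_sum_smul hbT, Finset.mul_sum]
  gcongr with i
  exact hc i

end Orthonormal

end InnerProductSpace

namespace Matrix

variable {𝕜 : Type*} [RCLike 𝕜] {m n : Type*} [Fintype m] [DecidableEq m] [Fintype n]
  [DecidableEq n]

theorem inner_toEuclideanLin_toEuclideanLin (A : Matrix m m 𝕜) (X : Matrix m n 𝕜)
    (v w : EuclideanSpace 𝕜 n) :
    ⟪toEuclideanLin X v, toEuclideanLin A (toEuclideanLin X w)⟫_𝕜 =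
      ⟪v, toEuclideanLin (Xᴴ * A * X) w⟫_𝕜 := by
  rw [toLpLin_mul_same, toLpLin_mul_same, LinearMap.comp_apply, LinearMap.comp_apply,
    toEuclideanLin_conjTranspose_eq_adjoint, LinearMap.adjoint_inner_right]

theorem orthonormal_toEuclideanLin_comp {X : Matrix m n 𝕜} (hX : Xᴴ * X = 1) {ι : Type*}
    {u : ι → EuclideanSpace 𝕜 n} (hu : Orthonormal 𝕜 u) : Orthonormal 𝕜 (toEuclideanLin X ∘ u) := by
  classical
  have h := inner_toEuclideanLin_toEuclideanLin 1 X
  simp only [Matrix.mul_one, hX, toLpLin_one, LinearMap.id_apply] at h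
  exact orthonormal_iff_ite.mpr fun i j => by
    simpa only [Function.comp_apply, h] using orthonormal_iff_ite.mp hu i j

theorem toEuclideanLin_mem_orthogonal_singleton {X : Matrix m n 𝕜} {x : EuclideanSpace 𝕜 m}
    (hXx : toEuclideanLin Xᴴ x = 0) (w : EuclideanSpace 𝕜 n) :
    toEuclideanLin X w ∈ (𝕜 ∙ x)ᗮ := by
  rw [mem_orthogonal_singleton_iff_inner_right, ← LinearMap.adjoint_inner_left,
    ← toEuclideanLin_conjTranspose_eq_adjoint, hXx, inner_zero_left]

theorem IsHermitian.toEuclideanLin_eigenvectorBasis {A : Matrix n n 𝕜} (hA : A.IsHermitian)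
    (i : n) : toEuclideanLin A (hA.eigenvectorBasis i) =
      (hA.eigenvalues i : 𝕜) • hA.eigenvectorBasis i := by
  apply WithLp.ofLp_injective
  rw [ofLp_toLpLin, toLin'_apply, hA.mulVec_eigenvectorBasis, WithLp.ofLp_smul,
    RCLike.real_smul_eq_coe_smul (K := 𝕜)]

variable {A : Matrix m m 𝕜} {x : EuclideanSpace 𝕜 m} {X : Matrix m n 𝕜}
  {b : OrthonormalBasis m 𝕜 (EuclideanSpace 𝕜 m)} {μ : m → ℝ}
  {u : OrthonormalBasis n 𝕜 (EuclideanSpace 𝕜 n)} {ν : n → ℝ} {lamt η c : ℝ}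

theorem IsHermitian.le_add_ritzGap (hA : A.IsHermitian) (hx : ‖x‖ = 1)
    (hlamt : ⟪x, toEuclideanLin A x⟫_𝕜 = lamt) (hX : Xᴴ * X = 1)
    (hXx : toEuclideanLin Xᴴ x = 0) (hb : ∀ i, toEuclideanLin A (b i) = (μ i : 𝕜) • b i)
    (hu : ∀ j, toEuclideanLin (Xᴴ * A * X) (u j) = (ν j : 𝕜) • u j)
    (hη : 0 ≤ η) (hgap : ∀ j, η ≤ |lamt - ν j|)
    (hcard : Fintype.card m < 1 + #{j | ν j ≤ lamt} + #{i | c ≤ μ i}) :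
    c ≤ lamt + ritzGap η ‖toEuclideanLin A x - (lamt : 𝕜) • x‖ := by
  set u' : {j // ν j ≤ lamt} → EuclideanSpace 𝕜 n := fun j => u j
  set b' : {i // c ≤ μ i} → EuclideanSpace 𝕜 m := fun i => b i
  have hu' : Orthonormal 𝕜 u' := u.orthonormal.comp _ Subtype.val_injective
  have hb' : Orthonormal 𝕜 b' := b.orthonormal.comp _ Subtype.val_injective
  have hXu' : Orthonormal 𝕜 (toEuclideanLin X ∘ u') := orthonormal_toEuclideanLin_comp hX hu'
  refine (isSymmetric_toEuclideanLin_iff.mpr hA).le_add_ritzGap hx hlamt hη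
    (Z := span 𝕜 (Set.range (toEuclideanLin X ∘ u'))) (Y := span 𝕜 (Set.range b')) ?_ ?_ ?_ ?_
  · exact span_le.mpr <| Set.range_subset_iff.mpr fun j =>
      toEuclideanLin_mem_orthogonal_singleton hXx _
  · intro z hz
    refine hXu'.re_inner_map_self_le_mul_norm_sq (T := toEuclideanLin A)
      (μ := fun j : {j // ν j ≤ lamt} => ν j) (fun i j => ?_) (fun j => ?_) hz
    · rw [Function.comp_apply, Function.comp_apply, inner_toEuclideanLin_toEuclideanLin]
      exact hu'.inner_map_eq_ite (fun j => hu j) i j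
    · have := hgap j
      rw [abs_of_nonneg (sub_nonneg.mpr j.2)] at this
      linarith
  · exact fun y hy =>
      hb'.mul_norm_sq_le_re_inner_map_self (hb'.inner_map_eq_ite fun i => hb i) (fun i => i.2) hy
  · rwa [finrank_span_eq_card hXu'.linearIndependent, finrank_span_eq_card hb'.linearIndependent,
      Fintype.card_subtype, Fintype.card_subtype, finrank_euclideanSpace]

theorem IsHermitian.sub_ritzGap_le (hA : A.IsHermitian) (hx : ‖x‖ = 1)
    (hlamt : ⟪x, toEuclideanLin A x⟫_𝕜 = lamt) (hX : Xᴴ * X = 1)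
    (hXx : toEuclideanLin Xᴴ x = 0) (hb : ∀ i, toEuclideanLin A (b i) = (μ i : 𝕜) • b i)
    (hu : ∀ j, toEuclideanLin (Xᴴ * A * X) (u j) = (ν j : 𝕜) • u j)
    (hη : 0 ≤ η) (hgap : ∀ j, η ≤ |lamt - ν j|)
    (hcard : Fintype.card m < 1 + #{j | lamt ≤ ν j} + #{i | μ i ≤ c}) :
    lamt - ritzGap η ‖toEuclideanLin A x - (lamt : 𝕜) • x‖ ≤ c := by
  have h := hA.neg.le_add_ritzGap (lamt := -lamt) (c := -c) (b := b) (μ := -μ) (u := u) (ν := -ν)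
    hx (by simp [hlamt]) hX hXx (fun i => by simp [hb])
    (fun j => by rw [Matrix.mul_neg, Matrix.neg_mul, map_neg, LinearMap.neg_apply, hu]; simp) hη
    (fun j => by rw [Pi.neg_apply, neg_sub_neg, abs_sub_comm]; exact hgap j)
    (by simpa using hcard)
  rw [map_neg, LinearMap.neg_apply, ofReal_neg, neg_smul, ← neg_sub', norm_neg] at h
  linarith

end Matrix

section Counting

variable {α κ : Type*} [LinearOrder α] {m : ℕ}

theorem Antitone.add_one_le_card_filter_le {f : Fin m → α} (hf : Antitone f) (k : Fin m) :
    (k : ℕ) + 1 ≤ #{i | f k ≤ f i} := by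
  rw [← Fin.card_Iic]
  exact card_le_card fun i hi => mem_filter.mpr ⟨mem_univ _, hf (mem_Iic.mp hi)⟩

theorem Antitone.sub_le_card_filter_le {f : Fin m → α} (hf : Antitone f) (k : Fin m) :
    m - k ≤ #{i | f i ≤ f k} := by
  rw [← Fin.card_Ici]
  exact card_le_card fun i hi => mem_filter.mpr ⟨mem_univ _, hf (mem_Ici.mp hi)⟩

variable [Fintype κ] {e : Fin m ≃ Fin 1 ⊕ κ} {a : α} {ν : κ → α}

theorem card_sub_le_card_filter_le_of_antitone
    (he : Antitone fun i => Sum.elim (fun _ => a) ν (e i)) :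
    Fintype.card κ - e.symm (.inl 0) ≤ #{j | ν j ≤ a} := by
  have hlt : #{j | a < ν j} ≤ e.symm (.inl 0) := by
    rw [← Fin.card_Iio]
    refine card_le_card_of_injOn (fun j => e.symm (.inr j)) (fun j hj => ?_)
      (e.symm.injective.comp Sum.inr_injective).injOn
    rw [mem_coe, mem_filter] at hj
    rw [mem_coe, mem_Iio]
    by_contra! h
    have := he h
    simp only [Equiv.apply_symm_apply, Sum.elim_inl, Sum.elim_inr] at this
    exact this.not_gt hj.2
  have := card_filter_add_card_filter_not (s := univ) (fun j => ν j ≤ a)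
  simp only [not_le, card_univ] at this
  omega

theorem le_card_filter_le_of_antitone
    (he : Antitone fun i => Sum.elim (fun _ => a) ν (e i)) :
    (e.symm (.inl 0) : ℕ) ≤ #{j | a ≤ ν j} := by
  have hlt : #{j | ν j < a} ≤ m - 1 - e.symm (.inl 0) := by
    rw [← Fin.card_Ioi]
    refine card_le_card_of_injOn (fun j => e.symm (.inr j)) (fun j hj => ?_)
      (e.symm.injective.comp Sum.inr_injective).injOn
    rw [mem_coe, mem_filter] at hj
    rw [mem_coe, mem_Ioi]
    by_contra! h
    have := he h
    simp only [Equiv.apply_symm_apply, Sum.elim_inl, Sum.elim_inr] at this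
    exact this.not_gt hj.2
  have hm : m = 1 + Fintype.card κ := by simpa using Fintype.card_congr e
  have := card_filter_add_card_filter_not (s := univ) (fun j => a ≤ ν j)
  simp only [not_le, card_univ] at this
  omega

end Counting

theorem ritz_value_residual_bound_general {n : ℕ}
    (A : Matrix (Fin (n + 1)) (Fin (n + 1)) ℂ) (hA : A.IsHermitian)
    (x : Fin (n + 1) → ℂ) (hx : euclNorm x = 1)
    (lamt : ℝ) (hlamt : (lamt : ℂ) = star x ⬝ᵥ A.mulVec x)
    (X₂ : Matrix (Fin (n + 1)) (Fin n) ℂ)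
    (hX₂ : X₂ᴴ * X₂ = 1) (hX₂x : X₂ᴴ.mulVec x = 0)
    (hH : (X₂ᴴ * A * X₂).IsHermitian)
    (lam : Fin (n + 1) → ℝ) (hlam_anti : Antitone lam)
    (hlam_eig : ∃ p : Equiv.Perm (Fin (n + 1)), lam = hA.eigenvalues ∘ p)
    (e : Fin (n + 1) ≃ (Fin 1 ⊕ Fin n))
    (he : Antitone fun i => Sum.elim (fun _ => lamt) hH.eigenvalues (e i)) :
    |lam (e.symm (Sum.inl 0)) - lamt| ≤
      2 * euclNorm (A.mulVec x - (lamt : ℂ) • x) ^ 2 /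
        ((⨅ j, |lamt - hH.eigenvalues j|) +
          Real.sqrt ((⨅ j, |lamt - hH.eigenvalues j|) ^ 2 +
            4 * euclNorm (A.mulVec x - (lamt : ℂ) • x) ^ 2)) := by
  obtain ⟨p, hp⟩ := hlam_eig
  set k := e.symm (Sum.inl 0)
  set η := ⨅ j, |lamt - hH.eigenvalues j|
  have hη : 0 ≤ η := Real.iInf_nonneg fun j => abs_nonneg _
  have hgap (j : Fin n) : η ≤ |lamt - hH.eigenvalues j| :=
    ciInf_le (Set.finite_range _).bddBelow j
  have hx' : ‖WithLp.toLp 2 x‖ = 1 := hx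
  have hlamt' : ⟪WithLp.toLp 2 x, toEuclideanLin A (WithLp.toLp 2 x)⟫_ℂ = lamt := by
    rw [hlamt, EuclideanSpace.inner_eq_star_dotProduct, dotProduct_comm]
    rfl
  have hXx : toEuclideanLin X₂ᴴ (WithLp.toLp 2 x) = 0 := by
    rw [toLpLin_toLp, toLin'_apply, hX₂x]
    rfl
  have hb (i : Fin (n + 1)) : toEuclideanLin A (hA.eigenvectorBasis.reindex p.symm i) =
      (lam i : ℂ) • hA.eigenvectorBasis.reindex p.symm i := by
    simpa [hp, OrthonormalBasis.reindex_apply] using hA.toEuclideanLin_eigenvectorBasis (p i)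
  have hk : (k : ℕ) ≤ n := Fin.is_le k
  have hcardH := card_sub_le_card_filter_le_of_antitone he
  have hcardH' := le_card_filter_le_of_antitone he
  have hcardA := hlam_anti.add_one_le_card_filter_le k
  have hcardA' := hlam_anti.sub_le_card_filter_le k
  rw [Fintype.card_fin] at hcardH
  have hupper := hA.le_add_ritzGap (c := lam k) hx' hlamt' hX₂ hXx hb
    hH.toEuclideanLin_eigenvectorBasis hη hgap (by rw [Fintype.card_fin]; omega)
  have hlower := hA.sub_ritzGap_le (c := lam k) hx' hlamt' hX₂ hXx hb
    hH.toEuclideanLin_eigenvectorBasis hη hgap (by rw [Fintype.card_fin]; omega)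
  exact abs_sub_le_iff.mpr ⟨sub_le_iff_le_add'.mpr hupper, sub_le_comm.mpr hlower⟩

/-- **Residual bound for a Ritz value.** Let `A` be Hermitian of size `n+1 ≥ 2`,
`x` a unit vector with Rayleigh quotient `lamt = xᴴ A x` and residual
`r = A x − lamt x`. Let `X₂` have orthonormal columns spanning `x^⊥`, let
`Ĥ = X₂ᴴ A X₂` with `η̂` the distance from `lamt` to the spectrum of `Ĥ`, let
`lam` be the eigenvalues of `A` in decreasing order, and let `e` sort the merged
multiset `{lamt} ∪ spec Ĥ` decreasingly, `k = e.symm (inl 0)` being the position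
of `lamt` therein. Then `|lam k − lamt| ≤ 2‖r‖²/(η̂ + √(η̂² + 4‖r‖²))`. -/
theorem ritz_value_residual_bound {n : ℕ} (hn : 1 ≤ n)
    (A : Matrix (Fin (n + 1)) (Fin (n + 1)) ℂ) (hA : A.IsHermitian)
    (x : Fin (n + 1) → ℂ) (hx : euclNorm x = 1)
    (lamt : ℝ) (hlamt : (lamt : ℂ) = star x ⬝ᵥ A.mulVec x)
    (X₂ : Matrix (Fin (n + 1)) (Fin n) ℂ)
    (hX₂ : X₂ᴴ * X₂ = 1) (hX₂x : X₂ᴴ.mulVec x = 0)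
    (hH : (X₂ᴴ * A * X₂).IsHermitian)
    (lam : Fin (n + 1) → ℝ) (hlam_anti : Antitone lam)
    (hlam_eig : ∃ p : Equiv.Perm (Fin (n + 1)), lam = hA.eigenvalues ∘ p)
    (e : Fin (n + 1) ≃ (Fin 1 ⊕ Fin n))
    (he : Antitone fun i => Sum.elim (fun _ => lamt) hH.eigenvalues (e i)) :
    |lam (e.symm (Sum.inl 0)) - lamt| ≤
      2 * euclNorm (A.mulVec x - (lamt : ℂ) • x) ^ 2 /
        ((⨅ j, |lamt - hH.eigenvalues j|) +
          Real.sqrt ((⨅ j, |lamt - hH.eigenvalues j|) ^ 2 +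
            4 * euclNorm (A.mulVec x - (lamt : ℂ) • x) ^ 2)) :=
  ritz_value_residual_bound_general A hA x hx lamt hlamt X₂ hX₂ hX₂x hH lam hlam_anti hlam_eig e he
end

section
/- Let A = fromBlocks H₁ Eᴴ E H₂ be an (m+n)×(m+n) Hermitian complex matrix with smallest eigenvalue λ_{m+n}, and let λ̃_{m+n} be the smallest eigenvalue of à = fromBlocks H₁ 0 0 H₂. Then λ_{m+n} ≤ λ̃_{m+n}; moreover, if λ_{m+n} < λ̃_{m+n}, then η_{m+n} := the distance from λ̃_{m+n} to the spectrum of the block not containing λ̃_{m+n} satisfies λ̃_{m+n} − λ_{m+n} ≤ 2‖E‖² / (η_{m+n} + √(η_{m+n}² + 4‖E‖²)). -/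
/-!
Testing the Rayleigh quotient of `A` on eigenvectors of `H₁` or `H₂` padded with zeros gives
`λ ≤ λ̃`. For the gap bound, split a unit eigenvector `v` of `A` for `λ` as `(x, y)` with
`a = ‖x‖`, `b = ‖y‖`. If the eigenvalues of `H₁` are at least `μ₁` and those of `H₂` at least
`μ₂`, then `λ = ⟨v, A v⟩ ≥ μ₁ a² + μ₂ b² - 2‖E‖ab`, i.e. `(μ₁ - λ) a² + (μ₂ - λ) b² ≤ 2‖E‖ab`,
and when both coefficients are positive the discriminant of this binary form gives
`(μ₁ - λ)(μ₂ - λ) ≤ ‖E‖²`. Taking `{μ₁, μ₂} = {λ̃, λ̃ + η}` and `δ = λ̃ - λ`, this is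
`δ (δ + η) ≤ ‖E‖²`, so `δ` is at most the positive root `2‖E‖² / (η + √(η² + 4‖E‖²))`.
-/

open Matrix

open WithLp
open scoped MatrixOrder

namespace Matrix

variable {𝕜 ι κ : Type*} [RCLike 𝕜] [Fintype ι] [Fintype κ]

lemma re_star_dotProduct_self (x : ι → 𝕜) : RCLike.re (star x ⬝ᵥ x) = ‖toLp 2 x‖ ^ 2 := by
  rw [← inner_self_eq_norm_sq (𝕜 := 𝕜), EuclideanSpace.inner_eq_star_dotProduct, dotProduct_comm]

lemma norm_toLp_sumElim_sq (x : ι → 𝕜) (y : κ → 𝕜) :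
    ‖toLp 2 (Sum.elim x y)‖ ^ 2 = ‖toLp 2 x‖ ^ 2 + ‖toLp 2 y‖ ^ 2 := by
  simp only [← re_star_dotProduct_self, Function.star_sumElim, sumElim_dotProduct_sumElim, map_add]

lemma re_star_sumElim_dotProduct_fromBlocks_mulVec (H₁ : Matrix ι ι 𝕜) (H₂ : Matrix κ κ 𝕜)
    (E : Matrix κ ι 𝕜) (x : ι → 𝕜) (y : κ → 𝕜) :
    RCLike.re (star (Sum.elim x y) ⬝ᵥ (fromBlocks H₁ Eᴴ E H₂ *ᵥ Sum.elim x y)) =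
      RCLike.re (star x ⬝ᵥ (H₁ *ᵥ x)) + 2 * RCLike.re (star y ⬝ᵥ (E *ᵥ x)) +
        RCLike.re (star y ⬝ᵥ (H₂ *ᵥ y)) := by
  have hconj : star x ⬝ᵥ (Eᴴ *ᵥ y) = star (star y ⬝ᵥ (E *ᵥ x)) := by
    rw [star_dotProduct, star_mulVec, conjTranspose_conjTranspose, ← dotProduct_mulVec]
  simp only [Function.star_sumElim, fromBlocks_mulVec, Sum.elim_comp_inl, Sum.elim_comp_inr,
    sumElim_dotProduct_sumElim, dotProduct_add, hconj, map_add, RCLike.star_def, RCLike.conj_re]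
  ring

variable [DecidableEq ι]

lemma IsHermitian.mul_norm_sq_le_re_dotProduct_mulVec {M : Matrix ι ι 𝕜} (hM : M.IsHermitian)
    {μ : ℝ} (hμ : ∀ i, μ ≤ hM.eigenvalues i) (x : ι → 𝕜) :
    μ * ‖toLp 2 x‖ ^ 2 ≤ RCLike.re (star x ⬝ᵥ (M *ᵥ x)) := by
  have hle : algebraMap ℝ (Matrix ι ι 𝕜) μ ≤ M := by
    rw [algebraMap_le_iff_le_spectrum hM.isSelfAdjoint, hM.spectrum_real_eq_range_eigenvalues]
    rintro _ ⟨i, rfl⟩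
    exact hμ i
  have hpsd := (Matrix.le_iff.mp hle).re_dotProduct_nonneg x
  rw [sub_mulVec, dotProduct_sub, map_sub, Algebra.algebraMap_eq_smul_one, smul_mulVec,
    one_mulVec, dotProduct_smul, RCLike.smul_re, re_star_dotProduct_self] at hpsd
  linarith

lemma IsHermitian.le_eigenvalues_of_forall_mul_norm_sq_le {M : Matrix ι ι 𝕜} (hM : M.IsHermitian)
    {μ : ℝ} (h : ∀ x, μ * ‖toLp 2 x‖ ^ 2 ≤ RCLike.re (star x ⬝ᵥ (M *ᵥ x))) (i : ι) :
    μ ≤ hM.eigenvalues i := by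
  simpa [hM.eigenvectorBasis.orthonormal.1 i, ← hM.eigenvalues_eq] using h (hM.eigenvectorBasis i)

variable [DecidableEq κ]

lemma le_eigenvalues_of_le_eigenvalues_fromBlocks₁₁ {H₁ : Matrix ι ι 𝕜} {B : Matrix ι κ 𝕜}
    {C : Matrix κ ι 𝕜} {H₂ : Matrix κ κ 𝕜} (hA : (fromBlocks H₁ B C H₂).IsHermitian)
    (hH₁ : H₁.IsHermitian) {μ : ℝ} (hμ : ∀ k, μ ≤ hA.eigenvalues k) (i : ι) :
    μ ≤ hH₁.eigenvalues i := by
  refine hH₁.le_eigenvalues_of_forall_mul_norm_sq_le (fun x => ?_) i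
  simpa [norm_toLp_sumElim_sq, fromBlocks_mulVec, Function.star_sumElim] using
    hA.mul_norm_sq_le_re_dotProduct_mulVec hμ (Sum.elim x 0)

lemma le_eigenvalues_of_le_eigenvalues_fromBlocks₂₂ {H₁ : Matrix ι ι 𝕜} {B : Matrix ι κ 𝕜}
    {C : Matrix κ ι 𝕜} {H₂ : Matrix κ κ 𝕜} (hA : (fromBlocks H₁ B C H₂).IsHermitian)
    (hH₂ : H₂.IsHermitian) {μ : ℝ} (hμ : ∀ k, μ ≤ hA.eigenvalues k) (j : κ) :
    μ ≤ hH₂.eigenvalues j := by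
  refine hH₂.le_eigenvalues_of_forall_mul_norm_sq_le (fun y => ?_) j
  simpa [norm_toLp_sumElim_sq, fromBlocks_mulVec, Function.star_sumElim] using
    hA.mul_norm_sq_le_re_dotProduct_mulVec hμ (Sum.elim 0 y)

end Matrix

lemma mul_le_sq_of_quadratic_form_le {p q ε a b : ℝ} (hp : 0 < p) (hq : 0 < q)
    (hab : 0 < a ^ 2 + b ^ 2) (h : p * a ^ 2 + q * b ^ 2 ≤ 2 * ε * a * b) : p * q ≤ ε ^ 2 := by
  have ha : a ≠ 0 := by
    rintro rfl
    nlinarith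
  have hb : b ≠ 0 := by
    rintro rfl
    nlinarith
  have hform : 0 ≤ p * a ^ 2 + q * b ^ 2 := by positivity
  have hsq : (p * a ^ 2 + q * b ^ 2) ^ 2 ≤ (2 * ε * a * b) ^ 2 := pow_le_pow_left₀ hform h 2
  refine le_of_mul_le_mul_right ?_ (by positivity : 0 < (a * b) ^ 2)
  nlinarith [sq_nonneg (p * a ^ 2 - q * b ^ 2)]

lemma le_two_mul_sq_div_of_mul_add_le_sq {δ η ε : ℝ} (hη : 0 ≤ η)
    (h : δ * (δ + η) ≤ ε ^ 2) : δ ≤ 2 * ε ^ 2 / (η + √(η ^ 2 + 4 * ε ^ 2)) := by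
  set s := √(η ^ 2 + 4 * ε ^ 2)
  have hs : s ^ 2 = η ^ 2 + 4 * ε ^ 2 := Real.sq_sqrt (by positivity)
  have hroot : 2 * δ + η ≤ s := Real.le_sqrt_of_sq_le (by nlinarith)
  rcases (add_nonneg hη (Real.sqrt_nonneg _) : 0 ≤ η + s).eq_or_lt with h0 | hpos
  · rw [← h0, div_zero]
    linarith
  · rw [le_div_iff₀ hpos]
    nlinarith [mul_le_mul_of_nonneg_right hroot hpos.le]

lemma add_iInf_abs_sub_le {ι : Type*} {f : ι → ℝ} {c : ℝ} (hc : ∀ i, c ≤ f i) (j : ι) :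
    c + ⨅ i, |c - f i| ≤ f j := by
  have h := ciInf_le (f := fun i => |c - f i|) ⟨0, by rintro _ ⟨i, rfl⟩; exact abs_nonneg _⟩ j
  rw [abs_sub_comm, abs_of_nonneg (sub_nonneg.2 (hc j))] at h
  linarith

lemma norm_star_dotProduct_mulVec_le_specNorm {m n : ℕ} (E : Matrix (Fin n) (Fin m) ℂ)
    (x : Fin m → ℂ) (y : Fin n → ℂ) :
    ‖star y ⬝ᵥ (E *ᵥ x)‖ ≤ specNorm E * ‖toLp 2 x‖ * ‖toLp 2 y‖ := by
  have hE : ‖toLp 2 (E *ᵥ x)‖ ≤ specNorm E * ‖toLp 2 x‖ :=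
    (LinearMap.toContinuousLinearMap (toEuclideanLin E)).le_opNorm (toLp 2 x)
  calc ‖star y ⬝ᵥ (E *ᵥ x)‖ = ‖inner ℂ (toLp 2 y) (toLp 2 (E *ᵥ x))‖ := by
        rw [EuclideanSpace.inner_eq_star_dotProduct, dotProduct_comm]
    _ ≤ ‖toLp 2 y‖ * ‖toLp 2 (E *ᵥ x)‖ := norm_inner_le_norm _ _
    _ ≤ specNorm E * ‖toLp 2 x‖ * ‖toLp 2 y‖ :=
        (mul_le_mul_of_nonneg_left hE (norm_nonneg _)).trans_eq (mul_comm _ _)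

lemma le_re_star_sumElim_dotProduct_fromBlocks_mulVec {m n : ℕ} {H₁ : Matrix (Fin m) (Fin m) ℂ}
    {H₂ : Matrix (Fin n) (Fin n) ℂ} (hH₁ : H₁.IsHermitian) (hH₂ : H₂.IsHermitian)
    (E : Matrix (Fin n) (Fin m) ℂ) {μ₁ μ₂ : ℝ} (h₁ : ∀ i, μ₁ ≤ hH₁.eigenvalues i)
    (h₂ : ∀ j, μ₂ ≤ hH₂.eigenvalues j) (x : Fin m → ℂ) (y : Fin n → ℂ) :
    μ₁ * ‖toLp 2 x‖ ^ 2 + μ₂ * ‖toLp 2 y‖ ^ 2 - 2 * specNorm E * ‖toLp 2 x‖ * ‖toLp 2 y‖ ≤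
      RCLike.re (star (Sum.elim x y) ⬝ᵥ (fromBlocks H₁ Eᴴ E H₂ *ᵥ Sum.elim x y)) := by
  rw [re_star_sumElim_dotProduct_fromBlocks_mulVec]
  have hx := hH₁.mul_norm_sq_le_re_dotProduct_mulVec h₁ x
  have hy := hH₂.mul_norm_sq_le_re_dotProduct_mulVec h₂ y
  have hxy := neg_le_of_abs_le <| (RCLike.abs_re_le_norm (star y ⬝ᵥ (E *ᵥ x))).trans
    (norm_star_dotProduct_mulVec_le_specNorm E x y)
  linarith

lemma sub_eigenvalues_mul_sub_eigenvalues_le_specNorm_sq {m n : ℕ}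
    {H₁ : Matrix (Fin m) (Fin m) ℂ} {H₂ : Matrix (Fin n) (Fin n) ℂ} {E : Matrix (Fin n) (Fin m) ℂ}
    (hA : (fromBlocks H₁ Eᴴ E H₂).IsHermitian) (hH₁ : H₁.IsHermitian) (hH₂ : H₂.IsHermitian)
    {μ₁ μ₂ : ℝ} (h₁ : ∀ i, μ₁ ≤ hH₁.eigenvalues i) (h₂ : ∀ j, μ₂ ≤ hH₂.eigenvalues j)
    (k : Fin m ⊕ Fin n) (hk₁ : hA.eigenvalues k < μ₁) (hk₂ : hA.eigenvalues k < μ₂) :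
    (μ₁ - hA.eigenvalues k) * (μ₂ - hA.eigenvalues k) ≤ specNorm E ^ 2 := by
  set v := ⇑(hA.eigenvectorBasis k)
  set a := ‖toLp 2 (v ∘ Sum.inl)‖
  set b := ‖toLp 2 (v ∘ Sum.inr)‖
  have hab : a ^ 2 + b ^ 2 = 1 := by
    rw [← norm_toLp_sumElim_sq, Sum.elim_comp_inl_inr]
    simp [v, hA.eigenvectorBasis.orthonormal.1 k]
  have hle := le_re_star_sumElim_dotProduct_fromBlocks_mulVec hH₁ hH₂ E h₁ h₂ (v ∘ Sum.inl)
    (v ∘ Sum.inr)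
  rw [Sum.elim_comp_inl_inr, ← hA.eigenvalues_eq k] at hle
  refine mul_le_sq_of_quadratic_form_le (sub_pos.2 hk₁) (sub_pos.2 hk₂) (a := a) (b := b)
    (by linarith) ?_
  linear_combination hle - hA.eigenvalues k * hab

/-- The smallest eigenvalue `lamN` of `A = fromBlocks H₁ Eᴴ E H₂` is at most the
smallest eigenvalue `lamtN` of `Ã = fromBlocks H₁ 0 0 H₂`; and if `lamN < lamtN`
then, with `ηN` the distance from `lamtN` to the spectrum of the block not
containing it, `lamtN − lamN ≤ 2‖E‖²/(ηN + √(ηN² + 4‖E‖²))`. -/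
theorem smallest_eigenvalue_block_perturbation {m n : ℕ}
    (H₁ : Matrix (Fin m) (Fin m) ℂ) (H₂ : Matrix (Fin n) (Fin n) ℂ)
    (E : Matrix (Fin n) (Fin m) ℂ)
    (hH₁ : H₁.IsHermitian) (hH₂ : H₂.IsHermitian)
    (hA : (Matrix.fromBlocks H₁ Eᴴ E H₂).IsHermitian)
    (lamN lamtN ηN : ℝ)
    (hlamN : IsLeast (Set.range hA.eigenvalues) lamN)
    (hlamtN : IsLeast (Set.range hH₁.eigenvalues ∪ Set.range hH₂.eigenvalues) lamtN)
    (hηN : (lamtN ∈ Set.range hH₁.eigenvalues →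
              ηN = ⨅ j, |lamtN - hH₂.eigenvalues j|) ∧
           (lamtN ∉ Set.range hH₁.eigenvalues →
              ηN = ⨅ j, |lamtN - hH₁.eigenvalues j|)) :
    lamN ≤ lamtN ∧
    (lamN < lamtN →
      lamtN - lamN ≤
        2 * specNorm E ^ 2 / (ηN + Real.sqrt (ηN ^ 2 + 4 * specNorm E ^ 2))) := by
  have hlamN_le : ∀ k, lamN ≤ hA.eigenvalues k := fun k => hlamN.2 ⟨k, rfl⟩
  have hlamtN_le₁ : ∀ i, lamtN ≤ hH₁.eigenvalues i := fun i => hlamtN.2 (Or.inl ⟨i, rfl⟩)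
  have hlamtN_le₂ : ∀ j, lamtN ≤ hH₂.eigenvalues j := fun j => hlamtN.2 (Or.inr ⟨j, rfl⟩)
  refine ⟨?_, fun hlt => ?_⟩
  · rcases hlamtN.1 with ⟨i, rfl⟩ | ⟨j, rfl⟩
    · exact le_eigenvalues_of_le_eigenvalues_fromBlocks₁₁ hA hH₁ hlamN_le i
    · exact le_eigenvalues_of_le_eigenvalues_fromBlocks₂₂ hA hH₂ hlamN_le j
  obtain ⟨k, rfl⟩ := hlamN.1
  by_cases hmem : lamtN ∈ Set.range hH₁.eigenvalues
  · have hη : 0 ≤ ηN := hηN.1 hmem ▸ Real.iInf_nonneg fun _ => abs_nonneg _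
    have hgap := sub_eigenvalues_mul_sub_eigenvalues_le_specNorm_sq hA hH₁ hH₂ hlamtN_le₁
      (hηN.1 hmem ▸ add_iInf_abs_sub_le hlamtN_le₂) k hlt (by linarith)
    exact le_two_mul_sq_div_of_mul_add_le_sq hη (by linear_combination hgap)
  · have hη : 0 ≤ ηN := hηN.2 hmem ▸ Real.iInf_nonneg fun _ => abs_nonneg _
    have hgap := sub_eigenvalues_mul_sub_eigenvalues_le_specNorm_sq hA hH₁ hH₂
      (hηN.2 hmem ▸ add_iInf_abs_sub_le hlamtN_le₁) hlamtN_le₂ k (by linarith) hlt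
    exact le_two_mul_sq_div_of_mul_add_le_sq hη (by linear_combination hgap)
end
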